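/- Let Γ₀ be a countable set (a countable group Γ) endowed with a probability measure μ₀ of full support, let X be a countable set on which a group A acts with all orbits infinite, and let Y = Γ₀^X carry the product measure. Then the generalized Bernoulli shift action of A on Y, (a·y)(x) = y(a⁻¹·x), is measure-preserving and ergodic. -/

import Mathlib

open MeasureTheory ProbabilityTheory Set
open scoped Pointwise symmDiff

/-! The shift only permutes coordinates, so it preserves the product measure. For ergodicity,
approximate an invariant set `S` by a cylinder `C` depending on a finite set `F` of coordinates.
Since all orbits are infinite, B. H. Neumann's lemma on coset covers yields `a` moving `F` off
itself, so `C` and its translate by `a` are independent. Both approximate `S`, whence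
`μ S = μ S ^ 2`. -/

theorem MulAction.exists_disjoint_smul_finset_of_infinite_orbit {A X : Type*} [Group A]
    [MulAction A X] [DecidableEq X] (horb : ∀ x : X, (orbit A x).Infinite) (F : Finset X) :
    ∃ a : A, Disjoint F (a • F) := by
  classical
  by_contra! hmeet
  -- `{a | a • x = y}` is empty or the coset `g (x, y) • stabilizer A x`.
  let g : X × X → A := fun p => if h : ∃ a : A, a • p.1 = p.2 then h.choose else 1
  have hcover : ⋃ p ∈ F ×ˢ F, g p • (stabilizer A p.1 : Set A) = univ := by
    refine eq_univ_of_forall fun a => ?_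
    obtain ⟨y, hyF, hy⟩ := Finset.not_disjoint_iff.mp (hmeet a)
    obtain ⟨x, hxF, rfl⟩ := Finset.mem_smul_finset.mp hy
    have hex : ∃ b : A, b • x = a • x := ⟨a, rfl⟩
    refine mem_biUnion (x := (x, a • x)) (Finset.mem_product.mpr ⟨hxF, hyF⟩) ?_
    rw [mem_leftCoset_iff, SetLike.mem_coe, mem_stabilizer_iff, mul_smul, inv_smul_eq_iff]
    simp only [g, dif_pos hex, hex.choose_spec]
  obtain ⟨p, -, hfin⟩ := Subgroup.exists_finiteIndex_of_leftCoset_cover hcover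
  exact hfin.index_ne_zero (by rw [index_stabilizer, (horb p.1).ncard])

section SelfIndependence

variable {Ω : Type*} [MeasurableSpace Ω] {μ : Measure Ω} [IsProbabilityMeasure μ]

theorem indepSet_self_of_forall_approx {S : Set Ω} (hS : MeasurableSet S)
    (h : ∀ ε > 0, ∃ C C', MeasurableSet C ∧ MeasurableSet C' ∧ μ (S ∆ C) ≤ ENNReal.ofReal ε ∧
      μ (S ∆ C') ≤ ENNReal.ofReal ε ∧ μ (C ∩ C') = μ C * μ C') :
    IndepSet S S μ := by
  rw [indepSet_iff_measure_inter_eq_mul hS hS μ, inter_self]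
  suffices μ.real S = μ.real S * μ.real S by
    rwa [measureReal_def, ← ENNReal.toReal_mul,
      ENNReal.toReal_eq_toReal_iff' (measure_ne_top μ S) (by finiteness)] at this
  refine eq_of_forall_dist_le fun ε hε => ?_
  obtain ⟨C, C', hC, hC', hSC, hSC', hmul⟩ := h (ε / 4) (by positivity)
  replace hSC : μ.real (S ∆ C) ≤ ε / 4 := ENNReal.toReal_le_of_le_ofReal (by positivity) hSC
  replace hSC' : μ.real (S ∆ C') ≤ ε / 4 := ENNReal.toReal_le_of_le_ofReal (by positivity) hSC'
  replace hmul : μ.real (C ∩ C') = μ.real C * μ.real C' := by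
    simp only [measureReal_def, hmul, ENNReal.toReal_mul]
  have hdC := abs_measureReal_sub_le_measureReal_symmDiff (μ := μ) hS.nullMeasurableSet
    hC.nullMeasurableSet
  have hdC' := abs_measureReal_sub_le_measureReal_symmDiff (μ := μ) hS.nullMeasurableSet
    hC'.nullMeasurableSet
  have hdCC' : |μ.real S - μ.real (C ∩ C')| ≤ μ.real (S ∆ C) + μ.real (S ∆ C') := by
    refine (abs_measureReal_sub_le_measureReal_symmDiff (μ := μ) hS.nullMeasurableSet
      (hC.inter hC').nullMeasurableSet).trans
      ((measureReal_mono ?_).trans (measureReal_union_le _ _))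
    intro y
    simp only [mem_symmDiff, mem_inter_iff, mem_union]
    tauto
  have hS0 : 0 ≤ μ.real S := measureReal_nonneg
  have hS1 : μ.real S ≤ 1 := measureReal_le_one
  have hC'0 : 0 ≤ μ.real C' := measureReal_nonneg
  have hC'1 : μ.real C' ≤ 1 := measureReal_le_one
  rw [abs_le] at hdC hdC' hdCC'
  rw [Real.dist_eq, abs_le]
  constructor <;> nlinarith

theorem measure_eq_zero_or_one_of_measureDense_of_indep_preimage {ι : Type*} {T : ι → Ω → Ω}
    (hT : ∀ i, MeasurePreserving (T i) μ μ) {𝒜 : Set (Set Ω)} (h𝒜 : μ.MeasureDense 𝒜)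
    (hmix : ∀ C ∈ 𝒜, ∃ i, μ (C ∩ T i ⁻¹' C) = μ C * μ (T i ⁻¹' C))
    {S : Set Ω} (hS : MeasurableSet S) (hinv : ∀ i, T i ⁻¹' S = S) :
    μ S = 0 ∨ μ S = 1 := by
  refine measure_eq_zero_or_one_of_indepSet_self
    (indepSet_self_of_forall_approx hS fun ε hε => ?_)
  obtain ⟨C, hC𝒜, hSC⟩ := h𝒜.approx S hS (measure_ne_top μ S) ε hε
  obtain ⟨i, hmul⟩ := hmix C hC𝒜
  have hC := h𝒜.measurable C hC𝒜
  have hSC' : μ (S ∆ (T i ⁻¹' C)) = μ (S ∆ C) := by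
    conv_lhs => rw [← hinv i, ← preimage_symmDiff]
    exact (hT i).measure_preimage (hS.symmDiff hC).nullMeasurableSet
  exact ⟨C, T i ⁻¹' C, hC, (hT i).measurable hC, hSC.le, hSC' ▸ hSC.le, hmul⟩

end SelfIndependence

section Bernoulli

variable {Γ₀ : Type*} [MeasurableSpace Γ₀] (μ₀ : Measure Γ₀) [IsProbabilityMeasure μ₀]
  {A X : Type*} [Group A] [MulAction A X]

variable (Γ₀) in
def bernoulliShift (a : A) (y : X → Γ₀) : X → Γ₀ := fun x => y (a⁻¹ • x)

theorem bernoulliShift_eq_piCongrLeft (a : A) :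
    bernoulliShift Γ₀ a = MeasurableEquiv.piCongrLeft (fun _ : X => Γ₀) (MulAction.toPerm a) := by
  ext y x
  simp [bernoulliShift, MeasurableEquiv.coe_piCongrLeft, Equiv.piCongrLeft_apply]

theorem measurePreserving_bernoulliShift (a : A) :
    MeasurePreserving (bernoulliShift Γ₀ a) (Measure.infinitePi fun _ : X => μ₀)
      (Measure.infinitePi fun _ : X => μ₀) := by
  rw [bernoulliShift_eq_piCongrLeft]
  exact ⟨MeasurableEquiv.measurable _,
    Measure.infinitePi_map_piCongrLeft (fun _ : X => μ₀) (MulAction.toPerm a)⟩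

theorem indepFun_restrict_restrict_comp_bernoulliShift [DecidableEq X] {F : Finset X} {a : A}
    (hF : Disjoint F (a⁻¹ • F)) :
    IndepFun F.restrict (F.restrict ∘ bernoulliShift Γ₀ a)
      (Measure.infinitePi fun _ : X => μ₀) := by
  have hindep := (iIndepFun_infinitePi (P := fun _ : X => μ₀) (X := fun _ => id)
    fun _ => measurable_id).indepFun_finset F (a⁻¹ • F) hF fun _ => by fun_prop
  have hcomp : F.restrict ∘ bernoulliShift Γ₀ a =
      (fun (d : (a⁻¹ • F : Finset X) → Γ₀) (i : F) =>
        d ⟨a⁻¹ • i, Finset.smul_mem_smul_finset i.2⟩) ∘ (a⁻¹ • F).restrict := rfl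
  rw [hcomp]
  exact hindep.comp measurable_id (by fun_prop)

theorem exists_indep_preimage_bernoulliShift (horb : ∀ x : X, (MulAction.orbit A x).Infinite)
    {C : Set (X → Γ₀)} (hC : C ∈ measurableCylinders fun _ : X => Γ₀) :
    ∃ a : A, Measure.infinitePi (fun _ : X => μ₀) (C ∩ bernoulliShift Γ₀ a ⁻¹' C) =
      Measure.infinitePi (fun _ : X => μ₀) C *
        Measure.infinitePi (fun _ : X => μ₀) (bernoulliShift Γ₀ a ⁻¹' C) := by
  classical
  obtain ⟨F, S, hS, rfl⟩ := (mem_measurableCylinders C).mp hC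
  obtain ⟨a, ha⟩ := MulAction.exists_disjoint_smul_finset_of_infinite_orbit horb F
  exact ⟨a⁻¹, (indepFun_restrict_restrict_comp_bernoulliShift μ₀ (by rwa [inv_inv]))
    |>.measure_inter_preimage_eq_mul S S hS hS⟩

theorem measure_eq_zero_or_one_of_preimage_bernoulliShift_eq
    (horb : ∀ x : X, (MulAction.orbit A x).Infinite) {S : Set (X → Γ₀)} (hS : MeasurableSet S)
    (hinv : ∀ a : A, bernoulliShift Γ₀ a ⁻¹' S = S) :
    Measure.infinitePi (fun _ : X => μ₀) S = 0 ∨ Measure.infinitePi (fun _ : X => μ₀) S = 1 :=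
  measure_eq_zero_or_one_of_measureDense_of_indep_preimage (measurePreserving_bernoulliShift μ₀)
    (.of_generateFrom_isSetAlgebra_finite _ isSetAlgebra_measurableCylinders
      generateFrom_measurableCylinders.symm)
    (fun _ hC => exists_indep_preimage_bernoulliShift μ₀ horb hC) hS hinv

end Bernoulli

theorem bernoulli_shift_ergodic_general (Γ₀ : Type*) [MeasurableSpace Γ₀]
    (μ₀ : Measure Γ₀) [IsProbabilityMeasure μ₀]
    (A : Type*) [Group A] (X : Type*) [MulAction A X]
    (horb : ∀ x : X, (MulAction.orbit A x).Infinite)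
    (μ : Measure (X → Γ₀))
    (hμ : ∀ (F : Finset X) (t : X → Set Γ₀), (∀ x, MeasurableSet (t x)) →
      μ {y : X → Γ₀ | ∀ x ∈ F, y x ∈ t x} = ∏ x ∈ F, μ₀ (t x)) :
    (∀ a : A, MeasurePreserving (fun (y : X → Γ₀) (x : X) => y (a⁻¹ • x)) μ μ) ∧
    (∀ S : Set (X → Γ₀), MeasurableSet S →
      (∀ a : A, (fun (y : X → Γ₀) (x : X) => y (a⁻¹ • x)) ⁻¹' S = S) →
      μ S = 0 ∨ μ S = 1) := by
  obtain rfl : μ = Measure.infinitePi fun _ : X => μ₀ := Measure.eq_infinitePi _ hμ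
  exact ⟨measurePreserving_bernoulliShift μ₀,
    fun _ hS hinv => measure_eq_zero_or_one_of_preimage_bernoulliShift_eq μ₀ horb hS hinv⟩

/-- Let `Γ₀` be a countable set with a probability measure `μ₀` of full support, let `A`
act on a countable set `X` with all orbits infinite, and let `μ` be the product measure
on `Y = Γ₀^X`.  Then the generalized Bernoulli shift `(a·y)(x) = y(a⁻¹·x)` is
measure-preserving and ergodic. -/
theorem bernoulli_shift_ergodic (Γ₀ : Type*) [Countable Γ₀] [MeasurableSpace Γ₀]
    [MeasurableSingletonClass Γ₀] (μ₀ : Measure Γ₀) [IsProbabilityMeasure μ₀]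
    (hfull : ∀ γ : Γ₀, 0 < μ₀ {γ})
    (A : Type*) [Group A] (X : Type*) [Countable X] [MulAction A X]
    (horb : ∀ x : X, (MulAction.orbit A x).Infinite)
    (μ : Measure (X → Γ₀)) [IsProbabilityMeasure μ]
    (hμ : ∀ (F : Finset X) (t : X → Set Γ₀), (∀ x, MeasurableSet (t x)) →
      μ {y : X → Γ₀ | ∀ x ∈ F, y x ∈ t x} = ∏ x ∈ F, μ₀ (t x)) :
    (∀ a : A, MeasurePreserving (fun (y : X → Γ₀) (x : X) => y (a⁻¹ • x)) μ μ) ∧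
    (∀ S : Set (X → Γ₀), MeasurableSet S →
      (∀ a : A, (fun (y : X → Γ₀) (x : X) => y (a⁻¹ • x)) ⁻¹' S = S) →
      μ S = 0 ∨ μ S = 1) :=
  bernoulli_shift_ergodic_general Γ₀ μ₀ A X horb μ hμ
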